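/- arXiv:2006.05739 — 3 statements merged into one kernel-verified Lean document; each statement's English description precedes it below -/
import Mathlib

section
/- Let (K^(n))_{n≥1} be a family of CPTNI monotone metrics, let n ≥ 2, and let ρ = diag(p₁,…,pₙ) be a diagonal positive definite n×n matrix with Tr ρ ≤ 1. Then K^(n)_ρ(E₁₂^(n), E₁₂^(n)) = K^(2)_{diag(p₁,p₂)}(E₁₂^(2), E₁₂^(2)), where E₁₂^(n) denotes the n×n matrix unit with a single 1 in position (1,2); in particular this value depends only on p₁ and p₂. -/
open Matrix ComplexOrder

/-- Functional calculus for (Hermitian) matrices: apply `f` to each eigenvalue. -/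
noncomputable def herCFC {n : ℕ} (f : ℝ → ℝ) (A : Matrix (Fin n) (Fin n) ℂ) :
    Matrix (Fin n) (Fin n) ℂ :=
  if h : A.IsHermitian then
    (h.eigenvectorUnitary : Matrix (Fin n) (Fin n) ℂ) *
      Matrix.diagonal (fun i => (f (h.eigenvalues i) : ℂ)) *
      (star (h.eigenvectorUnitary : Matrix (Fin n) (Fin n) ℂ))
  else 0

/-- `f : (0,∞) → (0,∞)` is operator monotone. -/
def OperatorMonotone (f : ℝ → ℝ) : Prop :=
  (∀ x : ℝ, 0 < x → 0 < f x) ∧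
  ∀ (n : ℕ) (A B : Matrix (Fin n) (Fin n) ℂ), A.PosDef → B.PosDef →
    (B - A).PosSemidef → (herCFC f B - herCFC f A).PosSemidef

/-- `T` is completely positive and trace non-increasing. -/
def IsCPTNI {n m : ℕ} (T : Matrix (Fin n) (Fin n) ℂ → Matrix (Fin m) (Fin m) ℂ) : Prop :=
  ∃ (k : ℕ) (A : Fin k → Matrix (Fin m) (Fin n) ℂ),
    (∀ X, T X = ∑ i, A i * X * (A i)ᴴ) ∧
    ((1 : Matrix (Fin n) (Fin n) ℂ) - ∑ i, (A i)ᴴ * A i).PosSemidef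

/-- `K` is an inner product on the space of `n × n` complex matrices. -/
def IsInnerProduct {n : ℕ}
    (K : Matrix (Fin n) (Fin n) ℂ → Matrix (Fin n) (Fin n) ℂ → ℂ) : Prop :=
  (∀ X Y Z, K (X + Y) Z = K X Z + K Y Z) ∧
  (∀ X Y Z, K X (Y + Z) = K X Y + K X Z) ∧
  (∀ (c : ℂ) (X Y : Matrix (Fin n) (Fin n) ℂ), K X (c • Y) = c * K X Y) ∧
  (∀ (c : ℂ) (X Y : Matrix (Fin n) (Fin n) ℂ), K (c • X) Y = (starRingEnd ℂ) c * K X Y) ∧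
  (∀ X Y, K Y X = (starRingEnd ℂ) (K X Y)) ∧
  (∀ X, X ≠ 0 → 0 < (K X X).re)

/-- A family of CPTNI monotone metrics. -/
def MonotoneMetricFamily
    (K : (n : ℕ) → Matrix (Fin n) (Fin n) ℂ →
      Matrix (Fin n) (Fin n) ℂ → Matrix (Fin n) (Fin n) ℂ → ℂ) : Prop :=
  (∀ (n : ℕ) (ρ : Matrix (Fin n) (Fin n) ℂ), ρ.PosDef → ρ.trace.re ≤ 1 →
    IsInnerProduct (K n ρ)) ∧
  (∀ (n m : ℕ) (T : Matrix (Fin n) (Fin n) ℂ → Matrix (Fin m) (Fin m) ℂ), IsCPTNI T →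
    ∀ (σ : Matrix (Fin m) (Fin m) ℂ), σ.PosSemidef →
    ∀ (ρ : Matrix (Fin n) (Fin n) ℂ), ρ.PosDef → ρ.trace.re ≤ 1 →
    (T ρ + σ).PosDef → (T ρ + σ).trace.re ≤ 1 →
    ∀ (X : Matrix (Fin n) (Fin n) ℂ),
      (K m (T ρ + σ) (T X) (T X)).re ≤ (K n ρ X X).re)

/-! Let `V = restrictionMatrix e` select the first two coordinates. The compression
`X ↦ V X Vᴴ` is CPTNI and maps `ρ` to `diag(p₁, p₂)` and `E₁₂` to `E₁₂`. The embedding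
`Y ↦ Vᴴ Y V` is CPTNI as well; it recovers `E₁₂`, and it recovers `ρ` up to the positive
semidefinite remainder `σ = diag(0, 0, p₃, …, pₙ)`, which monotonicity allows. The two
monotonicity inequalities force the real parts to be equal, and `K(X, X)` is real by
Hermitian symmetry. -/

namespace Matrix

variable {m n : Type*} [DecidableEq m] [DecidableEq n]

def restrictionMatrix (e : m ↪ n) : Matrix m n ℂ :=
  (1 : Matrix n n ℂ).submatrix e id

variable (e : m ↪ n)

theorem submatrix_single_embedding (i j : m) (c : ℂ) :
    (single (e i) (e j) c).submatrix e e = single i j c := by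
  ext a b
  simp [single_apply, e.injective.eq_iff]

variable [Fintype m] [Fintype n]

omit [Fintype m] [DecidableEq m] in
theorem restrictionMatrix_mul_mul_conjTranspose (X : Matrix n n ℂ) :
    restrictionMatrix e * X * (restrictionMatrix e)ᴴ = X.submatrix e e := by
  ext i j
  simp [restrictionMatrix, mul_apply, one_apply]

omit [Fintype m] in
theorem restrictionMatrix_mul_conjTranspose :
    restrictionMatrix e * (restrictionMatrix e)ᴴ = 1 := by
  simpa using restrictionMatrix_mul_mul_conjTranspose e 1

omit [Fintype n] [DecidableEq m] in
theorem conjTranspose_restrictionMatrix_mul :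
    (restrictionMatrix e)ᴴ * restrictionMatrix e =
      diagonal fun a => if a ∈ Set.range e then 1 else 0 := by
  ext a b
  simp only [restrictionMatrix, mul_apply, conjTranspose_submatrix, conjTranspose_one,
    submatrix_apply, id, one_apply, mul_ite, mul_one, mul_zero]
  rw [← Finset.sum_map Finset.univ e (fun x => if x = b then if a = x then (1 : ℂ) else 0 else 0),
    Finset.sum_ite_eq']
  by_cases hab : a = b <;> simp [hab, eq_comm]

omit [DecidableEq m] in
theorem conjTranspose_mul_submatrix_mul (X : Matrix n n ℂ) :
    (restrictionMatrix e)ᴴ * X.submatrix e e * restrictionMatrix e =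
      (diagonal fun a => if a ∈ Set.range e then 1 else 0) * X *
        diagonal fun a => if a ∈ Set.range e then 1 else 0 := by
  rw [← restrictionMatrix_mul_mul_conjTranspose, ← conjTranspose_restrictionMatrix_mul]
  simp only [Matrix.mul_assoc]

omit [DecidableEq m] in
theorem conjTranspose_mul_submatrix_diagonal_mul_add (d : n → ℂ) :
    (restrictionMatrix e)ᴴ * (diagonal d).submatrix e e * restrictionMatrix e +
      diagonal (fun a => if a ∈ Set.range e then 0 else d a) = diagonal d := by
  rw [conjTranspose_mul_submatrix_mul, diagonal_mul_diagonal, diagonal_mul_diagonal,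
    diagonal_add]
  congr 1
  ext a
  split_ifs <;> simp

omit [DecidableEq m] in
theorem conjTranspose_mul_submatrix_single_mul (i j : m) (c : ℂ) :
    (restrictionMatrix e)ᴴ * (single (e i) (e j) c).submatrix e e * restrictionMatrix e =
      single (e i) (e j) c := by
  rw [conjTranspose_mul_submatrix_mul]
  ext a b
  simp only [diagonal_mul, mul_diagonal, single_apply]
  split_ifs <;> simp_all

end Matrix

theorem Matrix.PosSemidef.re_trace_submatrix_le {m n : Type*} [Fintype m] [Fintype n]
    {A : Matrix n n ℂ} (hA : A.PosSemidef) (e : m ↪ n) :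
    (A.submatrix e e).trace.re ≤ A.trace.re := by
  simp only [trace, diag_apply, submatrix_apply, Complex.re_sum]
  rw [← Finset.sum_map Finset.univ e (fun a => (A a a).re)]
  exact Finset.sum_le_sum_of_subset_of_nonneg (Finset.subset_univ _)
    fun a _ _ => Complex.nonneg_iff.mp hA.diag_nonneg |>.1

theorem isCPTNI_mul_mul_conjTranspose {m n : ℕ} {A : Matrix (Fin m) (Fin n) ℂ}
    (hA : ((1 : Matrix (Fin n) (Fin n) ℂ) - Aᴴ * A).PosSemidef) :
    IsCPTNI fun X : Matrix (Fin n) (Fin n) ℂ => (A * X * Aᴴ : Matrix (Fin m) (Fin m) ℂ) :=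
  ⟨1, fun _ => A, fun X => by simp, by simpa using hA⟩

theorem isCPTNI_submatrix {m n : ℕ} (e : Fin m ↪ Fin n) :
    IsCPTNI fun X : Matrix (Fin n) (Fin n) ℂ => X.submatrix e e := by
  simp_rw [← restrictionMatrix_mul_mul_conjTranspose e]
  refine isCPTNI_mul_mul_conjTranspose ?_
  rw [conjTranspose_restrictionMatrix_mul, ← diagonal_one, diagonal_sub]
  refine posSemidef_diagonal_iff.mpr fun a => ?_
  split_ifs <;> simp

theorem isCPTNI_conjTranspose_mul_mul_restrictionMatrix {m n : ℕ} (e : Fin m ↪ Fin n) :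
    IsCPTNI fun Y : Matrix (Fin m) (Fin m) ℂ =>
      (restrictionMatrix e)ᴴ * Y * restrictionMatrix e := by
  simpa only [conjTranspose_conjTranspose] using
    isCPTNI_mul_mul_conjTranspose (A := (restrictionMatrix e : Matrix (Fin m) (Fin n) ℂ)ᴴ)
      (by simpa [restrictionMatrix_mul_conjTranspose] using PosSemidef.zero)

theorem IsInnerProduct.im_self_eq_zero {n : ℕ}
    {K : Matrix (Fin n) (Fin n) ℂ → Matrix (Fin n) (Fin n) ℂ → ℂ} (hK : IsInnerProduct K)
    (X : Matrix (Fin n) (Fin n) ℂ) : (K X X).im = 0 :=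
  Complex.conj_eq_iff_im.mp (hK.2.2.2.2.1 X X).symm

theorem MonotoneMetricFamily.apply_self_eq_of_reversible
    {K : (n : ℕ) → Matrix (Fin n) (Fin n) ℂ →
      Matrix (Fin n) (Fin n) ℂ → Matrix (Fin n) (Fin n) ℂ → ℂ}
    (hK : MonotoneMetricFamily K) {n m : ℕ}
    {T : Matrix (Fin n) (Fin n) ℂ → Matrix (Fin m) (Fin m) ℂ}
    {S : Matrix (Fin m) (Fin m) ℂ → Matrix (Fin n) (Fin n) ℂ} (hT : IsCPTNI T) (hS : IsCPTNI S)
    {ρ σ : Matrix (Fin n) (Fin n) ℂ} (hρ : ρ.PosDef) (htr : ρ.trace.re ≤ 1)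
    (hTρ : (T ρ).PosDef) (htrT : (T ρ).trace.re ≤ 1) (hσ : σ.PosSemidef)
    (hSTρ : S (T ρ) + σ = ρ) {X : Matrix (Fin n) (Fin n) ℂ} (hSTX : S (T X) = X) :
    K m (T ρ) (T X) (T X) = K n ρ X X := by
  have hle : (K m (T ρ) (T X) (T X)).re ≤ (K n ρ X X).re := by
    simpa using hK.2 n m T hT 0 .zero ρ hρ htr (by simpa) (by simpa) X
  have hge : (K n ρ X X).re ≤ (K m (T ρ) (T X) (T X)).re := by
    have := hK.2 m n S hS σ hσ (T ρ) hTρ htrT (by rwa [hSTρ]) (by rwa [hSTρ]) (T X)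
    rwa [hSTρ, hSTX] at this
  refine Complex.ext (le_antisymm hle hge) ?_
  rw [(hK.1 m _ hTρ htrT).im_self_eq_zero, (hK.1 n ρ hρ htr).im_self_eq_zero]

/-- for a diagonal positive definite state, the value of a CPTNI monotone
metric on the matrix unit `E₁₂` depends only on `p₁` and `p₂`. -/
theorem stmt6
    (K : (n : ℕ) → Matrix (Fin n) (Fin n) ℂ →
      Matrix (Fin n) (Fin n) ℂ → Matrix (Fin n) (Fin n) ℂ → ℂ)
    (hK : MonotoneMetricFamily K)
    (n : ℕ) (hn : 2 ≤ n) (p : Fin n → ℝ)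
    (hρ : (Matrix.diagonal (fun i => (p i : ℂ))).PosDef)
    (htr : (Matrix.diagonal (fun i => (p i : ℂ))).trace.re ≤ 1) :
    K n (Matrix.diagonal (fun i => (p i : ℂ)))
      (Matrix.single (⟨0, by omega⟩ : Fin n) (⟨1, by omega⟩ : Fin n) 1)
      (Matrix.single (⟨0, by omega⟩ : Fin n) (⟨1, by omega⟩ : Fin n) 1) =
    K 2 (Matrix.diagonal ![(p ⟨0, by omega⟩ : ℂ), (p ⟨1, by omega⟩ : ℂ)])
      (Matrix.single 0 1 1) (Matrix.single 0 1 1) := by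
  set e : Fin 2 ↪ Fin n := Fin.castLEEmb hn
  have hρ₂ : diagonal ![(p ⟨0, by omega⟩ : ℂ), (p ⟨1, by omega⟩ : ℂ)] =
      (diagonal fun i => (p i : ℂ)).submatrix e e := by
    rw [submatrix_diagonal_embedding]
    congr 1
    ext i
    fin_cases i <;> rfl
  have hσ : (diagonal fun a => if a ∈ Set.range e then 0 else (p a : ℂ)).PosSemidef := by
    refine posSemidef_diagonal_iff.mpr fun a => ?_
    split_ifs
    · exact le_rfl
    · exact (posDef_diagonal_iff.mp hρ a).le
  rw [hρ₂, ← submatrix_single_embedding e 0 1]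
  exact (hK.apply_self_eq_of_reversible (isCPTNI_submatrix e)
    (isCPTNI_conjTranspose_mul_mul_restrictionMatrix e) hρ htr (hρ.submatrix e.injective)
    ((hρ.posSemidef.re_trace_submatrix_le e).trans htr) hσ
    (conjTranspose_mul_submatrix_diagonal_mul_add e _)
    (conjTranspose_mul_submatrix_single_mul e 0 1 1)).symm
end

section
/- Let (K^(n))_{n≥1} be a family of CPTNI monotone metrics, let ρ₁, ρ₂ be positive definite complex n×n matrices with Tr ρ₁ ≤ 1 and Tr ρ₂ ≤ 1, and let X₁, X₂ be complex n×n matrices. Then K^(n)_{(ρ₁+ρ₂)/2}((X₁+X₂)/2, (X₁+X₂)/2) ≤ (1/2)[ K^(n)_{ρ₁}(X₁, X₁) + K^(n)_{ρ₂}(X₂, X₂) ]. -/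
open Matrix ComplexOrder

/-!
Write `A ⊕ B` for block-diagonal `2n × 2n` matrices and `q_ρ(X) = Re K_ρ(X, X)`. Adding up the two
diagonal blocks is CPTNI, so the left-hand side is at most `q_ρ(X₁/2 ⊕ X₂/2)` with
`ρ = ρ₁/2 ⊕ ρ₂/2`. Compressing to one block and refilling the other one with a positive matrix is
CPTNI too: it makes the two blocks orthogonal, so `q_ρ(X₁/2 ⊕ X₂/2)` splits into one term per block,
and it lets the other block of the state be changed, which bounds the first term by
`q_σ(X₁/2 ⊕ 0)` with `σ = ρ₁/2 ⊕ ρ₁/2`. The block swap fixes `σ`, so `X₁/2 ⊕ 0` and `0 ⊕ X₁/2`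
have the same length and `q_σ(X₁/2 ⊕ 0) = q_σ(X₁/2 ⊕ X₁/2) / 2 ≤ q_{ρ₁}(X₁) / 2`, the last step
by the CPTNI map `X ↦ X/2 ⊕ X/2` with Kraus operators `inl/√2`, `inr/√2`.
-/

lemma eq_zero_of_forall_nonneg_mul_add_mul_sq {a b : ℝ}
    (h : ∀ t : ℝ, 0 ≤ a * t + b * t ^ 2) : a = 0 := by
  by_contra ha
  have hneg : a ^ 2 * (b - |b| - 1) < 0 :=
    mul_neg_of_pos_of_neg (by positivity) (by linarith [le_abs_self b])
  have key := h (-a / (|b| + 1))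
  rw [show a * (-a / (|b| + 1)) + b * (-a / (|b| + 1)) ^ 2
      = a ^ 2 * (b - |b| - 1) / (|b| + 1) ^ 2 by field_simp; ring] at key
  exact (div_neg_of_neg_of_pos hneg (by positivity)).not_ge key

namespace IsInnerProduct

variable {n : ℕ} {Q : Matrix (Fin n) (Fin n) ℂ → Matrix (Fin n) (Fin n) ℂ → ℂ}

lemma re_apply_add_smul_self (hQ : IsInnerProduct Q) (Y Z : Matrix (Fin n) (Fin n) ℂ) (t : ℝ) :
    (Q (Y + (t : ℂ) • Z) (Y + (t : ℂ) • Z)).re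
      = (Q Y Y).re + 2 * (Q Y Z).re * t + (Q Z Z).re * t ^ 2 := by
  obtain ⟨hadd_left, hadd_right, hsmul_right, hsmul_left, hconj, -⟩ := hQ
  rw [hadd_left, hadd_right, hadd_right, hsmul_right, hsmul_right, hsmul_left, hsmul_left,
    hconj Y Z, Complex.conj_ofReal]
  simp only [Complex.add_re, Complex.re_ofReal_mul, Complex.conj_re]
  ring

-- Minimality along the line `Y + ℝ Z` forces `Re (Q Y Z) = 0`.
lemma re_apply_add_self_of_forall_le (hQ : IsInnerProduct Q) {Y Z : Matrix (Fin n) (Fin n) ℂ}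
    (hmin : ∀ t : ℝ, (Q Y Y).re ≤ (Q (Y + (t : ℂ) • Z) (Y + (t : ℂ) • Z)).re) :
    (Q (Y + Z) (Y + Z)).re = (Q Y Y).re + (Q Z Z).re := by
  have horth : 2 * (Q Y Z).re = 0 :=
    eq_zero_of_forall_nonneg_mul_add_mul_sq (b := (Q Z Z).re) fun t => by
      linarith [hmin t, hQ.re_apply_add_smul_self Y Z t]
  simpa [horth] using hQ.re_apply_add_smul_self Y Z 1

end IsInnerProduct

section Blocks

variable {n : ℕ}

noncomputable def blockInl (n : ℕ) : Matrix (Fin (n + n)) (Fin n) ℂ :=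
  (1 : Matrix (Fin (n + n)) (Fin (n + n)) ℂ).submatrix id (Fin.castAdd n)

noncomputable def blockInr (n : ℕ) : Matrix (Fin (n + n)) (Fin n) ℂ :=
  (1 : Matrix (Fin (n + n)) (Fin (n + n)) ℂ).submatrix id (Fin.natAdd n)

lemma conjTranspose_blockInl_mul_blockInl : (blockInl n)ᴴ * blockInl n = 1 := by
  rw [blockInl, conjTranspose_submatrix, conjTranspose_one,
    ← submatrix_mul _ _ _ _ _ Function.bijective_id, mul_one,
    submatrix_one _ (Fin.castAdd_injective n n)]

lemma conjTranspose_blockInr_mul_blockInr : (blockInr n)ᴴ * blockInr n = 1 := by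
  rw [blockInr, conjTranspose_submatrix, conjTranspose_one,
    ← submatrix_mul _ _ _ _ _ Function.bijective_id, mul_one,
    submatrix_one _ (Fin.natAdd_injective n n)]

lemma conjTranspose_blockInl_mul_blockInr : (blockInl n)ᴴ * blockInr n = 0 := by
  ext i j
  simp [blockInl, blockInr, conjTranspose_submatrix,
    ← submatrix_mul _ _ _ _ _ Function.bijective_id, one_apply, Fin.ext_iff]
  omega

lemma conjTranspose_blockInr_mul_blockInl : (blockInr n)ᴴ * blockInl n = 0 := by
  rw [← conjTranspose_conjTranspose ((blockInr n)ᴴ * blockInl n), conjTranspose_mul,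
    conjTranspose_conjTranspose, conjTranspose_blockInl_mul_blockInr, conjTranspose_zero]

lemma blockInl_mul_conjTranspose_add_blockInr_mul_conjTranspose :
    blockInl n * (blockInl n)ᴴ + blockInr n * (blockInr n)ᴴ = 1 := by
  ext i j
  rw [← mul_one (1 : Matrix (Fin (n + n)) (Fin (n + n)) ℂ), mul_apply, Fin.sum_univ_add]
  simp only [Matrix.add_apply, mul_apply, blockInl, blockInr, conjTranspose_submatrix,
    conjTranspose_one, submatrix_apply]
  rfl

section
variable {p : Type*} (X : Matrix (Fin n) p ℂ)

@[simp] lemma conjTranspose_blockInl_mul_blockInl_mul : (blockInl n)ᴴ * (blockInl n * X) = X := by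
  rw [← Matrix.mul_assoc, conjTranspose_blockInl_mul_blockInl, Matrix.one_mul]

@[simp] lemma conjTranspose_blockInr_mul_blockInr_mul : (blockInr n)ᴴ * (blockInr n * X) = X := by
  rw [← Matrix.mul_assoc, conjTranspose_blockInr_mul_blockInr, Matrix.one_mul]

@[simp] lemma conjTranspose_blockInl_mul_blockInr_mul : (blockInl n)ᴴ * (blockInr n * X) = 0 := by
  rw [← Matrix.mul_assoc, conjTranspose_blockInl_mul_blockInr, Matrix.zero_mul]

@[simp] lemma conjTranspose_blockInr_mul_blockInl_mul : (blockInr n)ᴴ * (blockInl n * X) = 0 := by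
  rw [← Matrix.mul_assoc, conjTranspose_blockInr_mul_blockInl, Matrix.zero_mul]

end

-- `A ⊕ B`, i.e. `fromBlocks A 0 0 B` reindexed along `Fin n ⊕ Fin n ≃ Fin (n + n)`.
noncomputable def blockDiag₂ (A B : Matrix (Fin n) (Fin n) ℂ) :
    Matrix (Fin (n + n)) (Fin (n + n)) ℂ :=
  blockInl n * A * (blockInl n)ᴴ + blockInr n * B * (blockInr n)ᴴ

variable (A B C D : Matrix (Fin n) (Fin n) ℂ)

lemma blockDiag₂_mul_blockDiag₂ :
    blockDiag₂ A B * blockDiag₂ C D = blockDiag₂ (A * C) (B * D) := by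
  simp [blockDiag₂, Matrix.mul_add, Matrix.add_mul, Matrix.mul_assoc]

lemma blockDiag₂_add_blockDiag₂ :
    blockDiag₂ A B + blockDiag₂ C D = blockDiag₂ (A + C) (B + D) := by
  simp only [blockDiag₂, Matrix.mul_add, Matrix.add_mul]
  abel

lemma smul_blockDiag₂ (c : ℂ) : c • blockDiag₂ A B = blockDiag₂ (c • A) (c • B) := by
  simp only [blockDiag₂, smul_add, Matrix.smul_mul, Matrix.mul_smul]

lemma conjTranspose_blockDiag₂ : (blockDiag₂ A B)ᴴ = blockDiag₂ Aᴴ Bᴴ := by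
  simp only [blockDiag₂, conjTranspose_add, conjTranspose_mul, conjTranspose_conjTranspose,
    Matrix.mul_assoc]

lemma blockDiag₂_one_one : blockDiag₂ (1 : Matrix (Fin n) (Fin n) ℂ) 1 = 1 := by
  simpa only [blockDiag₂, Matrix.mul_one]
    using blockInl_mul_conjTranspose_add_blockInr_mul_conjTranspose

lemma trace_blockDiag₂ : (blockDiag₂ A B).trace = A.trace + B.trace := by
  rw [blockDiag₂, trace_add, trace_mul_cycle, trace_mul_cycle (blockInr n),
    conjTranspose_blockInl_mul_blockInl, conjTranspose_blockInr_mul_blockInr, Matrix.one_mul,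
    Matrix.one_mul]

lemma conjTranspose_blockInl_mul_blockDiag₂_mul_blockInl :
    (blockInl n)ᴴ * blockDiag₂ A B * blockInl n = A := by
  simp [blockDiag₂, Matrix.mul_add, Matrix.mul_assoc, conjTranspose_blockInl_mul_blockInl]

lemma conjTranspose_blockInr_mul_blockDiag₂_mul_blockInr :
    (blockInr n)ᴴ * blockDiag₂ A B * blockInr n = B := by
  simp [blockDiag₂, Matrix.mul_add, Matrix.mul_assoc, conjTranspose_blockInr_mul_blockInr]

variable {A B}

lemma Matrix.PosSemidef.blockDiag₂ (hA : A.PosSemidef) (hB : B.PosSemidef) :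
    (blockDiag₂ A B).PosSemidef :=
  (hA.mul_mul_conjTranspose_same _).add (hB.mul_mul_conjTranspose_same _)

lemma Matrix.PosDef.blockDiag₂ (hA : A.PosDef) (hB : B.PosDef) : (blockDiag₂ A B).PosDef := by
  classical
  refine (hA.posSemidef.blockDiag₂ hB.posSemidef).posDef_iff_isUnit.mpr ?_
  refine .of_mul_eq_one (_root_.blockDiag₂ A⁻¹ B⁻¹) ?_
  rw [blockDiag₂_mul_blockDiag₂, mul_nonsing_inv _ ((isUnit_iff_isUnit_det A).mp hA.isUnit),
    mul_nonsing_inv _ ((isUnit_iff_isUnit_det B).mp hB.isUnit), blockDiag₂_one_one]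

variable (n) in
noncomputable def blockSwap : Matrix (Fin (n + n)) (Fin (n + n)) ℂ :=
  blockInl n * (blockInr n)ᴴ + blockInr n * (blockInl n)ᴴ

lemma conjTranspose_blockSwap : (blockSwap n)ᴴ = blockSwap n := by
  simp only [blockSwap, conjTranspose_add, conjTranspose_mul, conjTranspose_conjTranspose]
  abel

lemma conjTranspose_blockSwap_mul_blockSwap : (blockSwap n)ᴴ * blockSwap n = 1 := by
  rw [conjTranspose_blockSwap]
  simpa [blockSwap, Matrix.mul_add, Matrix.add_mul, Matrix.mul_assoc, add_comm]
    using blockInl_mul_conjTranspose_add_blockInr_mul_conjTranspose (n := n)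

lemma blockSwap_mul_blockDiag₂_mul_conjTranspose :
    blockSwap n * blockDiag₂ A B * (blockSwap n)ᴴ = blockDiag₂ B A := by
  rw [conjTranspose_blockSwap]
  simp [blockSwap, blockDiag₂, Matrix.mul_add, Matrix.add_mul, Matrix.mul_assoc, add_comm]

end Blocks

def IsSubstate {n : ℕ} (ρ : Matrix (Fin n) (Fin n) ℂ) : Prop :=
  ρ.PosDef ∧ ρ.trace.re ≤ 1

lemma re_trace_half_smul {n : ℕ} (A : Matrix (Fin n) (Fin n) ℂ) :
    ((1 / 2 : ℂ) • A).trace.re = A.trace.re / 2 := by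
  simp [trace_smul, div_eq_inv_mul]

lemma IsSubstate.half_smul_add_half_smul {n : ℕ} {A B : Matrix (Fin n) (Fin n) ℂ}
    (hA : IsSubstate A) (hB : IsSubstate B) :
    IsSubstate ((1 / 2 : ℂ) • A + (1 / 2 : ℂ) • B) := by
  refine ⟨(hA.1.smul (by norm_num)).add (hB.1.smul (by norm_num)), ?_⟩
  rw [trace_add, Complex.add_re, re_trace_half_smul, re_trace_half_smul]
  linarith [hA.2, hB.2]

lemma IsSubstate.blockDiag₂_half_smul {n : ℕ} {A B : Matrix (Fin n) (Fin n) ℂ}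
    (hA : IsSubstate A) (hB : IsSubstate B) :
    IsSubstate (blockDiag₂ ((1 / 2 : ℂ) • A) ((1 / 2 : ℂ) • B)) := by
  refine ⟨(hA.1.smul (by norm_num)).blockDiag₂ (hB.1.smul (by norm_num)), ?_⟩
  rw [trace_blockDiag₂, ← trace_add]
  exact (hA.half_smul_add_half_smul hB).2

lemma isCPTNI_conj {n m : ℕ} {V : Matrix (Fin m) (Fin n) ℂ} (hV : (1 - Vᴴ * V).PosSemidef) :
    IsCPTNI fun W : Matrix (Fin n) (Fin n) ℂ => V * W * Vᴴ :=
  ⟨1, fun _ => V, fun W => by simp, by simpa using hV⟩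

lemma isCPTNI_conj_add_conj {n m : ℕ} {V₁ V₂ : Matrix (Fin m) (Fin n) ℂ}
    (hV : (1 - (V₁ᴴ * V₁ + V₂ᴴ * V₂)).PosSemidef) :
    IsCPTNI fun W : Matrix (Fin n) (Fin n) ℂ => V₁ * W * V₁ᴴ + V₂ * W * V₂ᴴ :=
  ⟨2, (![V₁, V₂] : Fin 2 → Matrix (Fin m) (Fin n) ℂ), fun W => by simp [Fin.sum_univ_two],
    by simpa [Fin.sum_univ_two] using hV⟩

namespace MonotoneMetricFamily

variable {K : (n : ℕ) → Matrix (Fin n) (Fin n) ℂ →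
      Matrix (Fin n) (Fin n) ℂ → Matrix (Fin n) (Fin n) ℂ → ℂ}

lemma isInnerProduct (hK : MonotoneMetricFamily K)
    {n : ℕ} {ρ : Matrix (Fin n) (Fin n) ℂ} (hρ : IsSubstate ρ) :
    IsInnerProduct (K n ρ) :=
  hK.1 n ρ hρ.1 hρ.2

lemma re_apply_le (hK : MonotoneMetricFamily K)
    {n m : ℕ} {T : Matrix (Fin n) (Fin n) ℂ → Matrix (Fin m) (Fin m) ℂ}
    (hT : IsCPTNI T) {σ : Matrix (Fin m) (Fin m) ℂ} (hσ : σ.PosSemidef)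
    {ρ : Matrix (Fin n) (Fin n) ℂ} (hρ : IsSubstate ρ) {τ : Matrix (Fin m) (Fin m) ℂ}
    (hτ : IsSubstate τ) (hρτ : T ρ + σ = τ) {X : Matrix (Fin n) (Fin n) ℂ}
    {Z : Matrix (Fin m) (Fin m) ℂ} (hXZ : T X = Z) :
    (K m τ Z Z).re ≤ (K n ρ X X).re := by
  subst hρτ hXZ
  exact hK.2 n m T hT σ hσ ρ hρ.1 hρ.2 hτ.1 hτ.2 X

variable {n : ℕ} {A B C : Matrix (Fin n) (Fin n) ℂ}

lemma re_apply_add_le_re_apply_blockDiag₂ (hK : MonotoneMetricFamily K)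
    (hAB : IsSubstate (blockDiag₂ A B)) (hsum : IsSubstate (A + B))
    (X Y : Matrix (Fin n) (Fin n) ℂ) :
    (K n (A + B) (X + Y) (X + Y)).re
      ≤ (K (n + n) (blockDiag₂ A B) (blockDiag₂ X Y) (blockDiag₂ X Y)).re := by
  refine hK.re_apply_le
    (isCPTNI_conj_add_conj (V₁ := (blockInl n)ᴴ) (V₂ := (blockInr n)ᴴ) ?_) .zero hAB hsum ?_ ?_ <;>
    simp only [conjTranspose_conjTranspose,
      blockInl_mul_conjTranspose_add_blockInr_mul_conjTranspose,
      conjTranspose_blockInl_mul_blockDiag₂_mul_blockInl,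
      conjTranspose_blockInr_mul_blockDiag₂_mul_blockInr, sub_self, add_zero]
  exact .zero

-- The CPTNI map compresses to the first block; `0 ⊕ B` is then added to the output state.
lemma re_apply_blockDiag₂_zero_le (hK : MonotoneMetricFamily K)
    (hAB : IsSubstate (blockDiag₂ A B)) (hB : B.PosSemidef)
    (hAC : IsSubstate (blockDiag₂ A C)) (X Y : Matrix (Fin n) (Fin n) ℂ) :
    (K (n + n) (blockDiag₂ A B) (blockDiag₂ X 0) (blockDiag₂ X 0)).re
      ≤ (K (n + n) (blockDiag₂ A C) (blockDiag₂ X Y) (blockDiag₂ X Y)).re := by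
  have hE : 1 - (blockDiag₂ (1 : Matrix (Fin n) (Fin n) ℂ) 0)ᴴ * blockDiag₂ 1 0
      = blockDiag₂ 0 1 := by
    rw [conjTranspose_blockDiag₂, blockDiag₂_mul_blockDiag₂, ← blockDiag₂_one_one,
      sub_eq_iff_eq_add, blockDiag₂_add_blockDiag₂]
    simp
  refine hK.re_apply_le (isCPTNI_conj (V := blockDiag₂ 1 0) ?_) (.blockDiag₂ .zero hB) hAC hAB
    ?_ ?_
  · rw [hE]
    exact .blockDiag₂ .zero .one
  · simp [conjTranspose_blockDiag₂, blockDiag₂_mul_blockDiag₂, blockDiag₂_add_blockDiag₂]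
  · simp [conjTranspose_blockDiag₂, blockDiag₂_mul_blockDiag₂]

lemma re_apply_blockDiag₂_le_swap (hK : MonotoneMetricFamily K)
    (hAB : IsSubstate (blockDiag₂ A B)) (hBA : IsSubstate (blockDiag₂ B A))
    (X Y : Matrix (Fin n) (Fin n) ℂ) :
    (K (n + n) (blockDiag₂ B A) (blockDiag₂ Y X) (blockDiag₂ Y X)).re
      ≤ (K (n + n) (blockDiag₂ A B) (blockDiag₂ X Y) (blockDiag₂ X Y)).re := by
  refine hK.re_apply_le (isCPTNI_conj (V := blockSwap n) ?_) .zero hAB hBA ?_ ?_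
  · rw [conjTranspose_blockSwap_mul_blockSwap, sub_self]
    exact .zero
  · rw [blockSwap_mul_blockDiag₂_mul_conjTranspose, add_zero]
  · exact blockSwap_mul_blockDiag₂_mul_conjTranspose

lemma re_apply_blockDiag₂_swap (hK : MonotoneMetricFamily K)
    (hAB : IsSubstate (blockDiag₂ A B)) (hBA : IsSubstate (blockDiag₂ B A))
    (X Y : Matrix (Fin n) (Fin n) ℂ) :
    (K (n + n) (blockDiag₂ A B) (blockDiag₂ X Y) (blockDiag₂ X Y)).re
      = (K (n + n) (blockDiag₂ B A) (blockDiag₂ Y X) (blockDiag₂ Y X)).re :=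
  le_antisymm (hK.re_apply_blockDiag₂_le_swap hBA hAB Y X)
    (hK.re_apply_blockDiag₂_le_swap hAB hBA X Y)

-- By the compression above, `X ⊕ 0` minimises the metric on the line `X ⊕ ℝ Y`.
lemma re_apply_blockDiag₂_eq_add (hK : MonotoneMetricFamily K)
    (hAB : IsSubstate (blockDiag₂ A B)) (hB : B.PosSemidef)
    (X Y : Matrix (Fin n) (Fin n) ℂ) :
    (K (n + n) (blockDiag₂ A B) (blockDiag₂ X Y) (blockDiag₂ X Y)).re
      = (K (n + n) (blockDiag₂ A B) (blockDiag₂ X 0) (blockDiag₂ X 0)).re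
        + (K (n + n) (blockDiag₂ A B) (blockDiag₂ 0 Y) (blockDiag₂ 0 Y)).re := by
  have hsplit : blockDiag₂ X Y = blockDiag₂ X 0 + blockDiag₂ 0 Y := by
    simp [blockDiag₂_add_blockDiag₂]
  rw [hsplit]
  refine (hK.isInnerProduct hAB).re_apply_add_self_of_forall_le fun t => ?_
  rw [smul_blockDiag₂, blockDiag₂_add_blockDiag₂, smul_zero, add_zero, zero_add]
  exact hK.re_apply_blockDiag₂_zero_le hAB hB hAB X _

lemma re_apply_blockDiag₂_half_smul_le (hK : MonotoneMetricFamily K)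
    (hA : IsSubstate A) (X : Matrix (Fin n) (Fin n) ℂ) :
    (K (n + n) (blockDiag₂ ((1 / 2 : ℂ) • A) ((1 / 2 : ℂ) • A))
      (blockDiag₂ ((1 / 2 : ℂ) • X) ((1 / 2 : ℂ) • X))
      (blockDiag₂ ((1 / 2 : ℂ) • X) ((1 / 2 : ℂ) • X))).re ≤ (K n A X X).re := by
  set c : ℂ := (((Real.sqrt 2)⁻¹ : ℝ) : ℂ)
  have hstar : star c = c := Complex.conj_ofReal _
  have hc : c * c = 1 / 2 := by
    rw [← Complex.ofReal_mul, ← mul_inv, Real.mul_self_sqrt zero_le_two]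
    norm_num
  have hconj : ∀ M : Matrix (Fin n) (Fin n) ℂ,
      c • blockInl n * M * (c • blockInl n)ᴴ + c • blockInr n * M * (c • blockInr n)ᴴ
        = blockDiag₂ ((1 / 2 : ℂ) • M) ((1 / 2 : ℂ) • M) := fun M => by
    simp only [blockDiag₂, conjTranspose_smul, hstar, Matrix.smul_mul, Matrix.mul_smul, smul_smul,
      hc]
  refine hK.re_apply_le (isCPTNI_conj_add_conj ?_) .zero hA (hA.blockDiag₂_half_smul hA) ?_
    (hconj X)
  · simp only [conjTranspose_smul, hstar, Matrix.smul_mul, Matrix.mul_smul, smul_smul, hc,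
      conjTranspose_blockInl_mul_blockInl, conjTranspose_blockInr_mul_blockInr, ← add_smul]
    rw [add_halves, one_smul, sub_self]
    exact .zero
  · rw [hconj, add_zero]

lemma re_apply_blockDiag₂_half_smul_zero_le (hK : MonotoneMetricFamily K)
    (hA : IsSubstate A) (hB : IsSubstate B) (X : Matrix (Fin n) (Fin n) ℂ) :
    (K (n + n) (blockDiag₂ ((1 / 2 : ℂ) • A) ((1 / 2 : ℂ) • B))
      (blockDiag₂ ((1 / 2 : ℂ) • X) 0) (blockDiag₂ ((1 / 2 : ℂ) • X) 0)).re
      ≤ (K n A X X).re / 2 := by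
  have hAA := hA.blockDiag₂_half_smul hA
  have hA' : ((1 / 2 : ℂ) • A).PosSemidef := (hA.1.smul (by norm_num)).posSemidef
  have hB' : ((1 / 2 : ℂ) • B).PosSemidef := (hB.1.smul (by norm_num)).posSemidef
  have hcompress := hK.re_apply_blockDiag₂_zero_le (hA.blockDiag₂_half_smul hB) hB' hAA
    ((1 / 2 : ℂ) • X) 0
  have hswap := hK.re_apply_blockDiag₂_swap hAA hAA ((1 / 2 : ℂ) • X) 0
  have hsplit := hK.re_apply_blockDiag₂_eq_add hAA hA' ((1 / 2 : ℂ) • X) ((1 / 2 : ℂ) • X)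
  have hdup := hK.re_apply_blockDiag₂_half_smul_le hA X
  linarith

end MonotoneMetricFamily

/-- midpoint convexity of CPTNI monotone metrics. -/
theorem stmt10
    (K : (n : ℕ) → Matrix (Fin n) (Fin n) ℂ →
      Matrix (Fin n) (Fin n) ℂ → Matrix (Fin n) (Fin n) ℂ → ℂ)
    (hK : MonotoneMetricFamily K)
    (n : ℕ) (ρ₁ ρ₂ : Matrix (Fin n) (Fin n) ℂ)
    (hρ₁ : ρ₁.PosDef) (hρ₂ : ρ₂.PosDef)
    (htr₁ : ρ₁.trace.re ≤ 1) (htr₂ : ρ₂.trace.re ≤ 1)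
    (X₁ X₂ : Matrix (Fin n) (Fin n) ℂ) :
    (K n ((1 / 2 : ℂ) • (ρ₁ + ρ₂)) ((1 / 2 : ℂ) • (X₁ + X₂)) ((1 / 2 : ℂ) • (X₁ + X₂))).re ≤
      (1 / 2 : ℝ) * ((K n ρ₁ X₁ X₁).re + (K n ρ₂ X₂ X₂).re) := by
  have hρ₁' : IsSubstate ρ₁ := ⟨hρ₁, htr₁⟩
  have hρ₂' : IsSubstate ρ₂ := ⟨hρ₂, htr₂⟩
  have h₁₂ := hρ₁'.blockDiag₂_half_smul hρ₂'
  have hpartial := hK.re_apply_add_le_re_apply_blockDiag₂ h₁₂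
    (hρ₁'.half_smul_add_half_smul hρ₂') ((1 / 2 : ℂ) • X₁) ((1 / 2 : ℂ) • X₂)
  rw [← smul_add, ← smul_add,
    hK.re_apply_blockDiag₂_eq_add h₁₂ (hρ₂.smul (by norm_num)).posSemidef,
    hK.re_apply_blockDiag₂_swap h₁₂ (hρ₂'.blockDiag₂_half_smul hρ₁') 0] at hpartial
  have h₁ := hK.re_apply_blockDiag₂_half_smul_zero_le hρ₁' hρ₂' X₁
  have h₂ := hK.re_apply_blockDiag₂_half_smul_zero_le hρ₂' hρ₁' X₂
  linarith
end

section
/- Let f : (0,∞) → (0,∞) be operator monotone, let A and B be positive definite complex Hermitian n×n matrices, and let C be an invertible complex n×n matrix. Then C (A m_f B) C* = (C A C*) m_f (C B C*). -/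
open Matrix ComplexOrder

/-- The square root `A^{1/2}` of a (positive semidefinite Hermitian) matrix. -/
noncomputable def matSqrt {n : ℕ} (A : Matrix (Fin n) (Fin n) ℂ) :
    Matrix (Fin n) (Fin n) ℂ :=
  herCFC Real.sqrt A

/-- The operator mean `A m_f B = A^{1/2} · f (A^{-1/2} B A^{-1/2}) · A^{1/2}`. -/
noncomputable def matMean {n : ℕ} (f : ℝ → ℝ) (A B : Matrix (Fin n) (Fin n) ℂ) :
    Matrix (Fin n) (Fin n) ℂ :=
  matSqrt A * herCFC f ((matSqrt A)⁻¹ * B * (matSqrt A)⁻¹) * matSqrt A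

/-!
If `S` and `T` are Hermitian invertible square roots of `A` and `C A Cᴴ`, then `U = T⁻¹ C S`
is unitary, `T U = C S`, and `T⁻¹ (C B Cᴴ) T⁻¹ = U (S⁻¹ B S⁻¹) Uᴴ`. Since the functional
calculus commutes with conjugation by a unitary, both sides of the identity equal
`C S f(S⁻¹ B S⁻¹) S Cᴴ`.
-/

section Congruence

variable {m R : Type*} [Fintype m] [DecidableEq m] [CommRing R] [StarRing R]

lemma Matrix.star_nonsing_inv_mul_mul {S T : Matrix m m R} (C : Matrix m m R)
    (hS : S.IsHermitian) (hT : T.IsHermitian) : star (T⁻¹ * C * S) = S * Cᴴ * T⁻¹ := by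
  rw [star_eq_conjTranspose, conjTranspose_mul, conjTranspose_mul, conjTranspose_nonsing_inv,
    hS.eq, hT.eq, mul_assoc]

lemma Matrix.nonsing_inv_mul_mul_mem_unitary {S T C : Matrix m m R} (hS : S.IsHermitian)
    (hT : T.IsHermitian) (hTu : IsUnit T) (h : C * (S * S) * Cᴴ = T * T) :
    T⁻¹ * C * S ∈ unitary (Matrix m m R) := by
  have hTd := (T.isUnit_iff_isUnit_det).mp hTu
  have hright : T⁻¹ * C * S * star (T⁻¹ * C * S) = 1 := by
    calc T⁻¹ * C * S * star (T⁻¹ * C * S) = T⁻¹ * (C * (S * S) * Cᴴ) * T⁻¹ := by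
          rw [star_nonsing_inv_mul_mul C hS hT]; simp only [mul_assoc]
      _ = 1 := by rw [h, ← mul_assoc, nonsing_inv_mul _ hTd, one_mul, mul_nonsing_inv _ hTd]
  exact Unitary.mem_iff.mpr ⟨mul_eq_one_comm.mp hright, hright⟩

end Congruence

section FunctionalCalculus

variable {m 𝕜 : Type*} [Fintype m] [DecidableEq m] [RCLike 𝕜]

lemma Matrix.cfc_unitary_conj (f : ℝ → ℝ) (A : Matrix m m 𝕜) {U : Matrix m m 𝕜}
    (hU : U ∈ unitary (Matrix m m 𝕜)) : cfc f (U * A * star U) = U * cfc f A * star U := by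
  by_cases hA : IsSelfAdjoint A
  · have hcont : Continuous (Unitary.conjStarAlgAut 𝕜 (Matrix m m 𝕜) ⟨U, hU⟩) := by
      change Continuous fun A : Matrix m m 𝕜 => U * A * star U
      fun_prop
    exact (StarAlgHomClass.map_cfc (S := 𝕜) (Unitary.conjStarAlgAut 𝕜 _ ⟨U, hU⟩) f A
      (A.finite_real_spectrum.continuousOn f) hcont).symm
  · rw [cfc_apply_of_not_predicate _ hA, cfc_apply_of_not_predicate _
      ((Unitary.isUnit_coe (U := ⟨U, hU⟩)).isSelfAdjoint_conjugate_iff.not.mpr hA),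
      mul_zero, zero_mul]

lemma Matrix.mul_cfc_conj_mul_congruence (f : ℝ → ℝ) {S T C : Matrix m m 𝕜} (B : Matrix m m 𝕜)
    (hS : S.IsHermitian) (hSu : IsUnit S) (hT : T.IsHermitian) (hTu : IsUnit T)
    (h : C * (S * S) * Cᴴ = T * T) :
    C * (S * cfc f (S⁻¹ * B * S⁻¹) * S) * Cᴴ = T * cfc f (T⁻¹ * (C * B * Cᴴ) * T⁻¹) * T := by
  have hSd := (S.isUnit_iff_isUnit_det).mp hSu
  have hTd := (T.isUnit_iff_isUnit_det).mp hTu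
  set U := T⁻¹ * C * S with hU_def
  have hUstar : star U = S * Cᴴ * T⁻¹ := star_nonsing_inv_mul_mul C hS hT
  have hTU : T * U = C * S := by
    rw [hU_def, mul_assoc, mul_nonsing_inv_cancel_left _ _ hTd]
  have hUT : star U * T = S * Cᴴ := by
    rw [hUstar, nonsing_inv_mul_cancel_right _ _ hTd]
  have hconj : T⁻¹ * (C * B * Cᴴ) * T⁻¹ = U * (S⁻¹ * B * S⁻¹) * star U := by
    rw [hUstar, hU_def]
    simp only [mul_assoc, mul_nonsing_inv_cancel_left _ _ hSd]
    rw [← mul_assoc S⁻¹ S, nonsing_inv_mul _ hSd, one_mul]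
  calc C * (S * cfc f (S⁻¹ * B * S⁻¹) * S) * Cᴴ
      = (C * S) * cfc f (S⁻¹ * B * S⁻¹) * (S * Cᴴ) := by simp only [mul_assoc]
    _ = T * (U * cfc f (S⁻¹ * B * S⁻¹) * star U) * T := by
      rw [← hTU, ← hUT]; simp only [mul_assoc]
    _ = T * cfc f (T⁻¹ * (C * B * Cᴴ) * T⁻¹) * T := by
      rw [hconj, cfc_unitary_conj f _ (nonsing_inv_mul_mul_mem_unitary hS hT hTu h)]

end FunctionalCalculus

section MatSqrt

variable {n : ℕ}

lemma herCFC_eq_cfc (f : ℝ → ℝ) (A : Matrix (Fin n) (Fin n) ℂ) : herCFC f A = cfc f A := by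
  by_cases hA : A.IsHermitian
  · rw [hA.cfc_eq, herCFC, dif_pos hA]
    rfl
  · rw [herCFC, dif_neg hA]
    exact (cfc_apply_of_not_predicate A hA).symm

lemma matSqrt_isHermitian (A : Matrix (Fin n) (Fin n) ℂ) : (matSqrt A).IsHermitian := by
  rw [matSqrt, herCFC_eq_cfc]
  exact cfc_predicate _ A

open MatrixOrder in
lemma matSqrt_mul_self {A : Matrix (Fin n) (Fin n) ℂ} (hA : A.PosSemidef) :
    matSqrt A * matSqrt A = A := by
  rw [matSqrt, herCFC_eq_cfc, ← cfc_mul ..]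
  conv_rhs => rw [← cfc_id' ℝ A]
  exact cfc_congr fun x hx => Real.mul_self_sqrt (spectrum_nonneg_of_nonneg hA.nonneg hx)

lemma isUnit_matSqrt {A : Matrix (Fin n) (Fin n) ℂ} (hA : A.PosSemidef) (hAu : IsUnit A) :
    IsUnit (matSqrt A) :=
  isUnit_of_mul_isUnit_left ((matSqrt_mul_self hA).symm ▸ hAu)

end MatSqrt

theorem stmt19_general (f : ℝ → ℝ)
    {n : ℕ} (A B : Matrix (Fin n) (Fin n) ℂ) (hA : A.PosDef)
    (C : Matrix (Fin n) (Fin n) ℂ) (hC : IsUnit C) :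
    C * matMean f A B * Cᴴ = matMean f (C * A * Cᴴ) (C * B * Cᴴ) := by
  have hCAC : (C * A * Cᴴ).PosSemidef := hA.posSemidef.mul_mul_conjTranspose_same C
  have hCACu : IsUnit (C * A * Cᴴ) := (hC.mul hA.isUnit).mul hC.star
  simp only [matMean, herCFC_eq_cfc]
  refine mul_cfc_conj_mul_congruence f B (matSqrt_isHermitian A)
    (isUnit_matSqrt hA.posSemidef hA.isUnit) (matSqrt_isHermitian _) (isUnit_matSqrt hCAC hCACu) ?_
  rw [matSqrt_mul_self hA.posSemidef, matSqrt_mul_self hCAC]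

/-- invariance of the operator mean under congruence by an invertible
matrix: `C (A m_f B) Cᴴ = (C A Cᴴ) m_f (C B Cᴴ)`. -/
theorem stmt19 (f : ℝ → ℝ) (hf : OperatorMonotone f)
    {n : ℕ} (A B : Matrix (Fin n) (Fin n) ℂ) (hA : A.PosDef) (hB : B.PosDef)
    (C : Matrix (Fin n) (Fin n) ℂ) (hC : IsUnit C) :
    C * matMean f A B * Cᴴ = matMean f (C * A * Cᴴ) (C * B * Cᴴ) :=
  stmt19_general f A B hA C hC
end
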